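/- arXiv:2312.12093 — 2 statements merged into one kernel-verified Lean document; each statement's English description precedes it below -/
import Mathlib

section
/- If T is a bounded linear operator on a complex Hilbert space with T² = 0, then w(T) = (1/2)‖T‖. -/
/-!
Split `v = p + q` with `p` on the line through `T v` and `q ⟂ T v`. Since `T² = 0`, `T p = 0`,
so `⟪T v, v⟫ = ⟪T q, p⟫` with `p ⟂ q`, and `|⟪T q, p⟫| ≤ ‖T‖ ‖q‖ ‖p‖ ≤ ‖T‖ ‖v‖² / 2`.
Conversely `q ⟂ T q = T v` and `T (T q) = 0`, so the unit vector `x` along `q / ‖q‖ + T q / ‖T q‖`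
has `⟪T x, x⟫ = ‖T q‖ / (2 ‖q‖) ≥ ‖T v‖ / (2 ‖v‖)`.
-/

noncomputable def numRadius {E : Type*} [NormedAddCommGroup E] [InnerProductSpace ℂ E]
    (T : E →L[ℂ] E) : ℝ :=
  sSup {r : ℝ | ∃ x : E, ‖x‖ = 1 ∧ r = ‖(inner ℂ (T x) x : ℂ)‖}

noncomputable def blockOp {H : Type*} [NormedAddCommGroup H] [InnerProductSpace ℂ H]
    (n : ℕ) (M : Fin n → Fin n → H →L[ℂ] H) :
    (PiLp 2 fun _ : Fin n => H) →L[ℂ] (PiLp 2 fun _ : Fin n => H) :=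
  (PiLp.continuousLinearEquiv 2 ℂ (fun _ : Fin n => H)).symm.toContinuousLinearMap ∘L
    (ContinuousLinearMap.pi fun i => ∑ j, (M i j).comp (ContinuousLinearMap.proj j)) ∘L
    (PiLp.continuousLinearEquiv 2 ℂ (fun _ : Fin n => H)).toContinuousLinearMap

variable {H : Type*} [NormedAddCommGroup H] [InnerProductSpace ℂ H]

open scoped InnerProductSpace

namespace ContinuousLinearMap

variable {𝕜 E : Type*} [RCLike 𝕜] [NormedAddCommGroup E] [InnerProductSpace 𝕜 E]

theorem exists_orthogonal_split_of_comp_self_eq_zero {T : E →L[𝕜] E} (hT : T ∘L T = 0) (v : E) :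
    ∃ p q : E, p + q = v ∧ ⟪p, q⟫_𝕜 = 0 ∧ T q = T v ∧ ⟪T v, q⟫_𝕜 = 0 := by
  set K := 𝕜 ∙ T v
  have hTK : ∀ p ∈ K, T p = 0 := by
    intro p hp
    obtain ⟨a, rfl⟩ := Submodule.mem_span_singleton.mp hp
    simpa using congr(a • $hT v)
  have hq : v - K.starProjection v ∈ Kᗮ := K.sub_starProjection_mem_orthogonal v
  refine ⟨K.starProjection v, v - K.starProjection v, add_sub_cancel _ _,
    K.inner_right_of_mem_orthogonal (K.starProjection_apply_mem v) hq, ?_,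
    K.inner_right_of_mem_orthogonal (Submodule.mem_span_singleton_self _) hq⟩
  rw [map_sub, hTK _ (K.starProjection_apply_mem v), sub_zero]

theorem norm_inner_apply_le_of_inner_eq_zero (T : E →L[𝕜] E) {p q : E} (hpq : ⟪p, q⟫_𝕜 = 0) :
    ‖⟪T q, p⟫_𝕜‖ ≤ ‖T‖ / 2 * ‖p + q‖ ^ 2 := by
  have hpyth : ‖p + q‖ ^ 2 = ‖p‖ ^ 2 + ‖q‖ ^ 2 := by
    simpa only [sq] using norm_add_sq_eq_norm_sq_add_norm_sq_of_inner_eq_zero p q hpq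
  calc ‖⟪T q, p⟫_𝕜‖ ≤ ‖T‖ * ‖q‖ * ‖p‖ := by
        grw [norm_inner_le_norm, T.le_opNorm]
    _ ≤ ‖T‖ / 2 * ‖p + q‖ ^ 2 := by
        rw [hpyth, mul_assoc, div_mul_eq_mul_div, mul_div_assoc]
        gcongr
        nlinarith [sq_nonneg (‖p‖ - ‖q‖)]

theorem norm_inner_apply_self_le_of_comp_self_eq_zero {T : E →L[𝕜] E} (hT : T ∘L T = 0) (v : E) :
    ‖⟪T v, v⟫_𝕜‖ ≤ ‖T‖ / 2 * ‖v‖ ^ 2 := by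
  obtain ⟨p, q, rfl, hpq, hTq, hq⟩ := exists_orthogonal_split_of_comp_self_eq_zero hT v
  have : ⟪T (p + q), p + q⟫_𝕜 = ⟪T q, p⟫_𝕜 := by
    rw [inner_add_right, hq, add_zero, hTq]
  rw [this]
  exact T.norm_inner_apply_le_of_inner_eq_zero hpq

theorem norm_apply_le_of_inner_apply_self_eq_zero {T : E →L[𝕜] E} {w : ℝ}
    (hw : ∀ x, ‖⟪T x, x⟫_𝕜‖ ≤ w * ‖x‖ ^ 2) {e : E} (he : ⟪T e, e⟫_𝕜 = 0) (hTTe : T (T e) = 0) :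
    ‖T e‖ ≤ 2 * w * ‖e‖ := by
  set y := T e
  rcases eq_or_ne e 0 with rfl | he0
  · simp [y]
  have hw0 : 0 ≤ w := by
    have := (norm_nonneg _).trans (hw e)
    exact nonneg_of_mul_nonneg_left this (by positivity)
  rcases eq_or_ne y 0 with hy0 | hy0
  · rw [hy0, norm_zero]; positivity
  have hey : ⟪e, y⟫_𝕜 = 0 := by rw [← inner_conj_symm, he, map_zero]
  -- `x` is `‖e‖ * ‖T e‖` times the sum of the unit vectors along `e` and `T e`
  set x := (‖y‖ : 𝕜) • e + (‖e‖ : 𝕜) • y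
  have hTx : T x = (‖y‖ : 𝕜) • y := by simp [x, hTTe, y]
  have hinner : ⟪T x, x⟫_𝕜 = ((‖y‖ ^ 3 * ‖e‖ : ℝ) : 𝕜) := by
    rw [hTx]
    simp only [x, y, inner_add_right, inner_smul_left, inner_smul_right, he,
      inner_self_eq_norm_sq_to_K, RCLike.conj_ofReal, mul_zero, zero_add]
    push_cast
    ring
  have hnorm : ‖x‖ ^ 2 = 2 * ‖y‖ ^ 2 * ‖e‖ ^ 2 := by
    have := norm_add_sq_eq_norm_sq_add_norm_sq_of_inner_eq_zero ((‖y‖ : 𝕜) • e) ((‖e‖ : 𝕜) • y)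
      (by rw [inner_smul_left, inner_smul_right, hey]; simp)
    simp only [norm_smul, RCLike.norm_ofReal, abs_norm] at this
    rw [sq, this]; ring
  have key := hw x
  rw [hinner, hnorm, RCLike.norm_ofReal, abs_of_nonneg (by positivity)] at key
  have hy : 0 < ‖y‖ := norm_pos_iff.mpr hy0
  have he_pos : 0 < ‖e‖ := norm_pos_iff.mpr he0
  have : ‖y‖ ^ 2 * ‖e‖ * ‖y‖ ≤ ‖y‖ ^ 2 * ‖e‖ * (2 * w * ‖e‖) := by linarith
  exact le_of_mul_le_mul_left this (by positivity)

theorem opNorm_le_two_mul_of_comp_self_eq_zero {T : E →L[𝕜] E} (hT : T ∘L T = 0) {w : ℝ}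
    (hw0 : 0 ≤ w) (hw : ∀ x, ‖⟪T x, x⟫_𝕜‖ ≤ w * ‖x‖ ^ 2) : ‖T‖ ≤ 2 * w := by
  refine T.opNorm_le_bound (by positivity) fun v => ?_
  obtain ⟨p, q, rfl, hpq, hTq, hq⟩ := exists_orthogonal_split_of_comp_self_eq_zero hT v
  have hq_le : ‖q‖ ≤ ‖p + q‖ := by
    have := norm_add_sq_eq_norm_sq_add_norm_sq_of_inner_eq_zero p q hpq
    nlinarith [norm_nonneg q, norm_nonneg (p + q), mul_self_nonneg ‖p‖]
  calc ‖T (p + q)‖ = ‖T q‖ := by rw [hTq]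
    _ ≤ 2 * w * ‖q‖ := norm_apply_le_of_inner_apply_self_eq_zero hw (by rwa [hTq])
        (by rw [← comp_apply, hT, zero_apply])
    _ ≤ 2 * w * ‖p + q‖ := by gcongr

end ContinuousLinearMap

section numRadius

variable {E : Type*} [NormedAddCommGroup E] [InnerProductSpace ℂ E] (T : E →L[ℂ] E)

theorem numRadius_nonneg : 0 ≤ numRadius T :=
  Real.sSup_nonneg fun _ ⟨_, _, hr⟩ => hr ▸ norm_nonneg _

theorem numRadius_le {c : ℝ} (hc : 0 ≤ c) (h : ∀ x, ‖x‖ = 1 → ‖⟪T x, x⟫_ℂ‖ ≤ c) :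
    numRadius T ≤ c :=
  Real.sSup_le (fun _ ⟨x, hx, hr⟩ => hr ▸ h x hx) hc

theorem norm_inner_apply_self_le_numRadius_mul (x : E) : ‖⟪T x, x⟫_ℂ‖ ≤ numRadius T * ‖x‖ ^ 2 := by
  rcases eq_or_ne x 0 with rfl | hx
  · simp
  have hbdd : BddAbove {r : ℝ | ∃ x : E, ‖x‖ = 1 ∧ r = ‖⟪T x, x⟫_ℂ‖} := by
    refine ⟨‖T‖, fun _ ⟨x, hx, hr⟩ => ?_⟩
    rw [hr]
    calc ‖⟪T x, x⟫_ℂ‖ ≤ ‖T x‖ * ‖x‖ := norm_inner_le_norm _ _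
      _ ≤ ‖T‖ := by grw [T.le_opNorm, hx, mul_one, mul_one]
  have hx0 : 0 < ‖x‖ := norm_pos_iff.mpr hx
  set u := ((‖x‖⁻¹ : ℝ) : ℂ) • x
  have hu : ‖u‖ = 1 := by simp [u, norm_smul, hx0.ne']
  have hTu : ⟪T u, u⟫_ℂ = ((‖x‖⁻¹ ^ 2 : ℝ) : ℂ) * ⟪T x, x⟫_ℂ := by
    simp only [u, map_smul, inner_smul_left, inner_smul_right, Complex.conj_ofReal]
    push_cast
    ring
  have := le_csSup hbdd ⟨u, hu, rfl⟩
  rw [hTu, norm_mul, Complex.norm_real, Real.norm_of_nonneg (by positivity)] at this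
  calc ‖⟪T x, x⟫_ℂ‖ = ‖x‖⁻¹ ^ 2 * ‖⟪T x, x⟫_ℂ‖ * ‖x‖ ^ 2 := by field_simp
    _ ≤ numRadius T * ‖x‖ ^ 2 := by gcongr; exact this

end numRadius

theorem stmt1_general (T : H →L[ℂ] H) (h : T ∘L T = 0) :
    numRadius T = (1 / 2) * ‖T‖ := by
  refine le_antisymm (numRadius_le T (by positivity) fun x hx => ?_) ?_
  · simpa [hx, div_eq_inv_mul] using T.norm_inner_apply_self_le_of_comp_self_eq_zero h x
  · have := T.opNorm_le_two_mul_of_comp_self_eq_zero h (numRadius_nonneg T)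
      (norm_inner_apply_self_le_numRadius_mul T)
    linarith

theorem stmt1 [CompleteSpace H] (T : H →L[ℂ] H) (h : T ∘L T = 0) :
    numRadius T = (1 / 2) * ‖T‖ :=
  stmt1_general T h
end

section
/- Let T, S be bounded operators on a complex Hilbert space H and n an odd positive integer ≥ 3. Let R be the n×n block operator matrix on H^n with T on the main diagonal, S on the anti-diagonal off the center (the central entry, lying on both diagonals, is T), and zeros elsewhere. Then w(R) = max{w(T + S), w(T), w(T − S)}. -/
/-!
Pairing each coordinate `i` with its mirror `i.rev`, the quadratic form of `R` splits into the
forms of the `2 × 2` blocks `[[T, S], [S, T]]` (plus the central block `T` when `n` is odd), and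
`⟪T a + S b, a⟫ + ⟪T b + S a, b⟫ = (⟪(T + S)(a + b), a + b⟫ + ⟪(T - S)(a - b), a - b⟫) / 2`.
With the parallelogram law this bounds each block, and (taking `b = 0`) also `w(T)`, by
`max (w(T + S)) (w(T - S))`. Conversely, vectors supported on one mirror pair with `b = ±a`
realise the forms of `T ± S`.
-/

variable {H : Type*} [NormedAddCommGroup H] [InnerProductSpace ℂ H]

section NumRadius

variable {E : Type*} [NormedAddCommGroup E] [InnerProductSpace ℂ E]

lemma numRadius_nonneg_s10 (A : E →L[ℂ] E) : 0 ≤ numRadius A :=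
  Real.sSup_nonneg (by rintro r ⟨x, -, rfl⟩; positivity)

lemma norm_inner_self_le_numRadius (A : E →L[ℂ] E) {x : E} (hx : ‖x‖ = 1) :
    ‖(inner ℂ (A x) x : ℂ)‖ ≤ numRadius A := by
  refine le_csSup ⟨‖A‖, ?_⟩ ⟨x, hx, rfl⟩
  rintro r ⟨y, hy, rfl⟩
  calc ‖(inner ℂ (A y) y : ℂ)‖ ≤ ‖A y‖ * ‖y‖ := norm_inner_le_norm _ _
    _ ≤ ‖A‖ * ‖y‖ * ‖y‖ := by gcongr; exact A.le_opNorm y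
    _ = ‖A‖ := by rw [hy, mul_one, mul_one]

lemma norm_inner_smul_self (A : E →L[ℂ] E) (c : ℂ) (x : E) :
    ‖(inner ℂ (A (c • x)) (c • x) : ℂ)‖ = ‖c‖ ^ 2 * ‖(inner ℂ (A x) x : ℂ)‖ := by
  rw [map_smul, inner_smul_left, inner_smul_right, norm_mul, norm_mul, RCLike.norm_conj, sq,
    mul_assoc]

lemma norm_inner_self_le_numRadius_mul (A : E →L[ℂ] E) (x : E) :
    ‖(inner ℂ (A x) x : ℂ)‖ ≤ numRadius A * ‖x‖ ^ 2 := by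
  rcases eq_or_ne x 0 with rfl | hx
  · simp
  obtain ⟨c, y, hy, rfl⟩ : ∃ (c : ℂ) (y : E), ‖y‖ = 1 ∧ x = c • y :=
    ⟨‖x‖, (‖x‖⁻¹ : ℂ) • x, norm_smul_inv_norm hx,
      by rw [smul_smul, mul_inv_cancel₀ (by simpa using hx), one_smul]⟩
  rw [norm_inner_smul_self, norm_smul, hy, mul_one, mul_comm]
  gcongr
  exact norm_inner_self_le_numRadius A hy

lemma numRadius_le_of_norm_inner_self_le (A : E →L[ℂ] E) {b : ℝ} (hb : 0 ≤ b)
    (h : ∀ x, ‖(inner ℂ (A x) x : ℂ)‖ ≤ b * ‖x‖ ^ 2) : numRadius A ≤ b :=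
  Real.sSup_le (by rintro r ⟨x, hx, rfl⟩; simpa [hx] using h x) hb

lemma inner_pair_eq (T S : E →L[ℂ] E) (a b : E) :
    (inner ℂ (T a + S b) a : ℂ) + inner ℂ (T b + S a) b =
      (inner ℂ ((T + S) (a + b)) (a + b) + inner ℂ ((T - S) (a - b)) (a - b)) / 2 := by
  simp only [add_apply, sub_apply, map_add, map_sub, inner_add_left, inner_add_right,
    inner_sub_left, inner_sub_right]
  ring

lemma norm_inner_pair_le (T S : E →L[ℂ] E) (a b : E) :
    ‖(inner ℂ (T a + S b) a : ℂ) + inner ℂ (T b + S a) b‖ ≤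
      max (numRadius (T + S)) (numRadius (T - S)) * (‖a‖ ^ 2 + ‖b‖ ^ 2) := by
  set N := max (numRadius (T + S)) (numRadius (T - S))
  have hpar : ‖a + b‖ ^ 2 + ‖a - b‖ ^ 2 = 2 * (‖a‖ ^ 2 + ‖b‖ ^ 2) := by
    have := parallelogram_law_with_norm ℂ a b
    nlinarith
  rw [inner_pair_eq, norm_div, Complex.norm_two]
  have : ‖(inner ℂ ((T + S) (a + b)) (a + b) : ℂ) + inner ℂ ((T - S) (a - b)) (a - b)‖ ≤
      N * ‖a + b‖ ^ 2 + N * ‖a - b‖ ^ 2 :=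
    calc _ ≤ numRadius (T + S) * ‖a + b‖ ^ 2 + numRadius (T - S) * ‖a - b‖ ^ 2 :=
          (norm_add_le _ _).trans (add_le_add (norm_inner_self_le_numRadius_mul _ _)
            (norm_inner_self_le_numRadius_mul _ _))
      _ ≤ N * ‖a + b‖ ^ 2 + N * ‖a - b‖ ^ 2 := by
          gcongr; exacts [le_max_left _ _, le_max_right _ _]
  rw [← mul_add, hpar] at this
  linarith

lemma numRadius_le_max_add_sub (T S : E →L[ℂ] E) :
    numRadius T ≤ max (numRadius (T + S)) (numRadius (T - S)) :=
  numRadius_le_of_norm_inner_self_le T ((numRadius_nonneg_s10 _).trans (le_max_left _ _)) fun x => by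
    simpa using norm_inner_pair_le T S x 0

end NumRadius

section BlockOp

variable {n : ℕ}

lemma blockOp_apply (M : Fin n → Fin n → H →L[ℂ] H) (ξ : PiLp 2 fun _ : Fin n => H) (i : Fin n) :
    blockOp n M ξ i = ∑ j, M i j (ξ j) := by
  simp only [blockOp, ContinuousLinearMap.comp_apply, ContinuousLinearMap.coe_pi', sum_apply,
    ContinuousLinearMap.proj_apply]
  rfl

lemma Fin.val_add_val_eq_iff_eq_rev {i j : Fin n} : (i : ℕ) + j = n - 1 ↔ j = i.rev := by
  rw [Fin.ext_iff, Fin.val_rev]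
  omega

lemma Fin.sum_univ_comp_rev {M : Type*} [AddCommMonoid M] (f : Fin n → M) :
    ∑ i : Fin n, f i.rev = ∑ i, f i :=
  Fintype.sum_equiv Fin.revPerm _ _ fun _ => rfl

def diagAntidiag (T S : H →L[ℂ] H) (n : ℕ) : Fin n → Fin n → H →L[ℂ] H :=
  fun i j => if i = j then T else if (i : ℕ) + (j : ℕ) = n - 1 then S else 0

lemma blockOp_diagAntidiag_apply (T S : H →L[ℂ] H) (ξ : PiLp 2 fun _ : Fin n => H) (i : Fin n) :
    blockOp n (diagAntidiag T S n) ξ i = T (ξ i) + if i.rev = i then 0 else S (ξ i.rev) := by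
  rw [blockOp_apply]
  simp only [diagAntidiag, Fin.val_add_val_eq_iff_eq_rev]
  by_cases h : i.rev = i
  · rw [Fintype.sum_eq_single i fun j hj => by simp [Ne.symm hj, h ▸ hj]]
    simp [h]
  · rw [Fintype.sum_eq_add i i.rev (Ne.symm h) fun j hj => by simp [Ne.symm hj.1, hj.2]]
    simp [h, Ne.symm h]

lemma norm_inner_blockOp_diagAntidiag_le (T S : H →L[ℂ] H) (ξ : PiLp 2 fun _ : Fin n => H) :
    ‖(inner ℂ (blockOp n (diagAntidiag T S n) ξ) ξ : ℂ)‖ ≤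
      max (numRadius (T + S)) (max (numRadius T) (numRadius (T - S))) * ‖ξ‖ ^ 2 := by
  set N := max (numRadius (T + S)) (max (numRadius T) (numRadius (T - S)))
  set f : Fin n → ℂ := fun i => inner ℂ (blockOp n (diagAntidiag T S n) ξ i) (ξ i)
  have hT : numRadius T ≤ N := (le_max_left _ _).trans (le_max_right _ _)
  have hpair : ∀ i, ‖f i + f i.rev‖ ≤ N * (‖ξ i‖ ^ 2 + ‖ξ i.rev‖ ^ 2) := by
    intro i
    simp only [f, blockOp_diagAntidiag_apply, Fin.rev_rev]
    by_cases h : i.rev = i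
    · simp only [h, if_true, add_zero]
      calc _ ≤ numRadius T * ‖ξ i‖ ^ 2 + numRadius T * ‖ξ i‖ ^ 2 :=
            (norm_add_le _ _).trans (add_le_add (norm_inner_self_le_numRadius_mul _ _)
              (norm_inner_self_le_numRadius_mul _ _))
        _ ≤ N * (‖ξ i‖ ^ 2 + ‖ξ i‖ ^ 2) := by rw [← mul_add]; gcongr
    · rw [if_neg h, if_neg (Ne.symm h)]
      refine (norm_inner_pair_le T S _ _).trans ?_
      gcongr
      exact max_le_max le_rfl (le_max_right _ _)
  have h2 : 2 * (inner ℂ (blockOp n (diagAntidiag T S n) ξ) ξ : ℂ) = ∑ i, (f i + f i.rev) := by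
    rw [Finset.sum_add_distrib, Fin.sum_univ_comp_rev, PiLp.inner_apply, two_mul]
  have hnorm : ∑ i, (‖ξ i‖ ^ 2 + ‖ξ i.rev‖ ^ 2) = 2 * ‖ξ‖ ^ 2 := by
    rw [Finset.sum_add_distrib, Fin.sum_univ_comp_rev fun i => ‖ξ i‖ ^ 2,
      PiLp.norm_sq_eq_of_L2, two_mul]
  have : 2 * ‖(inner ℂ (blockOp n (diagAntidiag T S n) ξ) ξ : ℂ)‖ ≤ N * (2 * ‖ξ‖ ^ 2) :=
    calc _ = ‖∑ i, (f i + f i.rev)‖ := by rw [← h2, norm_mul, Complex.norm_two]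
      _ ≤ ∑ i, N * (‖ξ i‖ ^ 2 + ‖ξ i.rev‖ ^ 2) :=
          (norm_sum_le _ _).trans (Finset.sum_le_sum fun i _ => hpair i)
      _ = N * (2 * ‖ξ‖ ^ 2) := by rw [← Finset.mul_sum, hnorm]
  linarith

lemma norm_inner_pair_le_numRadius_blockOp (T S : H →L[ℂ] H) (hn : 2 ≤ n) (a b : H) :
    ‖(inner ℂ (T a + S b) a : ℂ) + inner ℂ (T b + S a) b‖ ≤
      numRadius (blockOp n (diagAntidiag T S n)) * (‖a‖ ^ 2 + ‖b‖ ^ 2) := by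
  obtain ⟨i, hi⟩ : ∃ i : Fin n, i ≠ i.rev :=
    ⟨⟨0, by omega⟩, by simp only [Ne, Fin.ext_iff, Fin.val_rev]; omega⟩
  set ξ : PiLp 2 (fun _ : Fin n => H) :=
    WithLp.toLp 2 fun j => if j = i then a else if j = i.rev then b else 0
  have hξ : ∀ j, j ≠ i ∧ j ≠ i.rev → ξ j = 0 := fun j hj => by simp [ξ, hj.1, hj.2]
  have hinner : (inner ℂ (blockOp n (diagAntidiag T S n) ξ) ξ : ℂ) =
      inner ℂ (T a + S b) a + inner ℂ (T b + S a) b := by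
    rw [PiLp.inner_apply, Fintype.sum_eq_add i i.rev hi fun j hj => by simp [hξ j hj]]
    simp [ξ, blockOp_diagAntidiag_apply, hi, hi.symm, inner_add_left]
  have hnorm : ‖ξ‖ ^ 2 = ‖a‖ ^ 2 + ‖b‖ ^ 2 := by
    rw [PiLp.norm_sq_eq_of_L2, Fintype.sum_eq_add i i.rev hi fun j hj => by simp [hξ j hj]]
    simp [ξ, hi.symm]
  rw [← hinner, ← hnorm]
  exact norm_inner_self_le_numRadius_mul _ _

lemma numRadius_add_le_numRadius_blockOp (T S : H →L[ℂ] H) (hn : 2 ≤ n) :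
    numRadius (T + S) ≤ numRadius (blockOp n (diagAntidiag T S n)) := by
  refine numRadius_le_of_norm_inner_self_le _ (numRadius_nonneg_s10 _) fun x => ?_
  have h := norm_inner_pair_le_numRadius_blockOp T S hn x x
  have h2 : (inner ℂ (T x + S x) x : ℂ) + inner ℂ (T x + S x) x = 2 * inner ℂ ((T + S) x) x := by
    rw [add_apply]
    ring
  rw [h2, norm_mul, Complex.norm_two] at h
  linarith

lemma numRadius_sub_le_numRadius_blockOp (T S : H →L[ℂ] H) (hn : 2 ≤ n) :
    numRadius (T - S) ≤ numRadius (blockOp n (diagAntidiag T S n)) := by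
  refine numRadius_le_of_norm_inner_self_le _ (numRadius_nonneg_s10 _) fun x => ?_
  have h := norm_inner_pair_le_numRadius_blockOp T S hn x (-x)
  have h2 : (inner ℂ (T x + S (-x)) x : ℂ) + inner ℂ (T (-x) + S x) (-x) =
      2 * inner ℂ ((T - S) x) x := by
    simp only [map_neg, inner_neg_right, sub_apply, inner_add_left, inner_neg_left, inner_sub_left]
    ring
  rw [h2, norm_mul, Complex.norm_two, norm_neg] at h
  linarith

end BlockOp

theorem stmt10_general (T S : H →L[ℂ] H) (n : ℕ) (hn : 3 ≤ n) :
    numRadius (blockOp n (fun i j =>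
        if i = j then T else if (i : ℕ) + (j : ℕ) = n - 1 then S else 0)) =
      max (numRadius (T + S)) (max (numRadius T) (numRadius (T - S))) := by
  change numRadius (blockOp n (diagAntidiag T S n)) = _
  have hadd := numRadius_add_le_numRadius_blockOp T S (n := n) (by omega)
  have hsub := numRadius_sub_le_numRadius_blockOp T S (n := n) (by omega)
  refine le_antisymm ?_ (max_le hadd (max_le ?_ hsub))
  · exact numRadius_le_of_norm_inner_self_le _ ((numRadius_nonneg_s10 _).trans (le_max_left _ _))
      (norm_inner_blockOp_diagAntidiag_le T S)
  · exact (numRadius_le_max_add_sub T S).trans (max_le hadd hsub)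

theorem stmt10 (T S : H →L[ℂ] H) (n : ℕ) (hn : 3 ≤ n) (hodd : Odd n) :
    numRadius (blockOp n (fun i j =>
        if i = j then T else if (i : ℕ) + (j : ℕ) = n - 1 then S else 0)) =
      max (numRadius (T + S)) (max (numRadius T) (numRadius (T - S))) :=
  stmt10_general T S n hn
end
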